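/- Let (X, G, Φ) be a dynamical system where X is a compact totally disconnected Hausdorff space. Then (X, G, Φ) is mixing if and only if (X, G, Φ) is conjugate to the inverse limit of an inverse system of dynamical systems, satisfying the Mittag-Leffler condition, each of whose terms is a mixing subshift (a closed shift-invariant subset of a full shift over some finite alphabet, with the shift G-action). -/

import Mathlib

/-! Forward: index an inverse system by the finite families `S` of clopen sets, the level-`S`
term being the subshift of `S`-itineraries `g ↦ (s ↦ [Φ_g x ∈ s])`. Each term is a factor of `X`,
hence mixing; the bonding maps are onto, so ML holds; and since clopen sets separate points and
`X` is compact, `x ↦ (itineraries of x)` is a conjugacy onto the inverse limit.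

Backward: a basic open set of the inverse limit is cut out at a single level `m`. Mixing at the
ML-stable level `m₀ ≥ m` produces points whose images at level `m` lie in the stable image, and
by compactness these lift to the inverse limit. -/

open Set

universe u

/-! ### Dynamical systems: actions of a countable discrete group by homeomorphisms -/

/-- An action of a group `G` on a topological space `X`: each `act g` is a homeomorphism
(continuity of the inverse follows from `act g⁻¹`). -/
structure DynAction (G X : Type u) [Group G] [TopologicalSpace X] where
  act : G → X → X
  continuous_act : ∀ g : G, Continuous (act g)
  act_one : ∀ x : X, act 1 x = x
  act_mul : ∀ (g g' : G) (x : X), act (g * g') x = act g (act g' x)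

section Covers

variable {G X : Type u} [Group G] [TopologicalSpace X]

/-- A finite open cover of `X`. -/
def IsFOC (𝒰 : Finset (Set X)) : Prop :=
  (∀ U ∈ 𝒰, IsOpen U) ∧ ⋃₀ (𝒰 : Set (Set X)) = Set.univ

/-- A finite partition of `X` into nonempty clopen sets. -/
def IsClopenPartition (𝒰 : Finset (Set X)) : Prop :=
  (∀ U ∈ 𝒰, IsClopen U ∧ U.Nonempty) ∧ ⋃₀ (𝒰 : Set (Set X)) = Set.univ ∧
    ∀ U ∈ 𝒰, ∀ V ∈ 𝒰, U ≠ V → U ∩ V = ∅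

/-- `𝒱` refines `𝒰`: every member of `𝒱` is contained in a member of `𝒰`. -/
def Refines (𝒱 𝒰 : Finset (Set X)) : Prop :=
  ∀ V ∈ 𝒱, ∃ U ∈ 𝒰, V ⊆ U

/-- `{U g}` is a pattern of the `(S,𝒰)`-pseudo-orbit `{x g}`:
all `U g` belong to `𝒰`, and `x (s*g) ∈ U (s*g)` and `Φ_s (x g) ∈ U (s*g)`
for all `g ∈ G`, `s ∈ S`. -/
def IsPseudoOrbitPattern (Φ : DynAction G X) (S : Set G) (𝒰 : Finset (Set X))
    (x : G → X) (U : G → Set X) : Prop :=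
  (∀ g : G, U g ∈ 𝒰) ∧
    ∀ g : G, ∀ s ∈ S, x (s * g) ∈ U (s * g) ∧ Φ.act s (x g) ∈ U (s * g)

/-- `{x g}` is an `(S,𝒰)`-pseudo-orbit. -/
def IsPseudoOrbit (Φ : DynAction G X) (S : Set G) (𝒰 : Finset (Set X)) (x : G → X) : Prop :=
  ∃ U : G → Set X, IsPseudoOrbitPattern Φ S 𝒰 x U

/-- `z` `𝒰`-shadows the family `{x g}`. -/
def Shadows (Φ : DynAction G X) (𝒰 : Finset (Set X)) (z : X) (x : G → X) : Prop :=
  ∀ g : G, ∃ U ∈ 𝒰, Φ.act g z ∈ U ∧ x g ∈ U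

/-- The (topological) `S`-shadowing property. -/
def ShadowingProperty (Φ : DynAction G X) (S : Set G) : Prop :=
  ∀ 𝒰 : Finset (Set X), IsFOC 𝒰 → ∃ 𝒱 : Finset (Set X), IsFOC 𝒱 ∧
    ∀ x : G → X, IsPseudoOrbit Φ S 𝒱 x → ∃ z : X, Shadows Φ 𝒰 z x

/-! ### Equivariant maps, factor maps, conjugacies -/

def IsEquivariant {Y : Type u} [TopologicalSpace Y]
    (ΦX : DynAction G X) (ΦY : DynAction G Y) (f : X → Y) : Prop :=
  ∀ (g : G) (x : X), f (ΦX.act g x) = ΦY.act g (f x)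

/-- `f` is a factor map from `(X,G,ΦX)` onto `(Y,G,ΦY)`. -/
def IsFactorMap {Y : Type u} [TopologicalSpace Y]
    (ΦX : DynAction G X) (ΦY : DynAction G Y) (f : X → Y) : Prop :=
  Continuous f ∧ Function.Surjective f ∧ IsEquivariant ΦX ΦY f

/-- `f` is a conjugacy (bijective factor map). -/
def IsConjugacy {Y : Type u} [TopologicalSpace Y]
    (ΦX : DynAction G X) (ΦY : DynAction G Y) (f : X → Y) : Prop :=
  Continuous f ∧ Function.Bijective f ∧ IsEquivariant ΦX ΦY f

end Covers

/-! ### Shifts, subshifts, shifts of finite type -/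

/-- The shift action on `A^G`: `(σ_g x) h = x (h * g)`. -/
def shift (G A : Type u) [Group G] (g : G) (x : G → A) : G → A :=
  fun h => x (h * g)

/-- The full shift `A^G` (product topology) as a dynamical system. -/
def shiftDyn (G A : Type u) [Group G] [TopologicalSpace A] : DynAction G (G → A) where
  act := shift G A
  continuous_act g := continuous_pi fun h => continuous_apply (h * g)
  act_one x := by funext h; simp [shift]
  act_mul g g' x := by funext h; simp [shift, mul_assoc]

/-- A subshift: a closed shift-invariant subset of the full shift `A^G`. -/
def IsSubshift {G A : Type u} [Group G] [TopologicalSpace A] (Y : Set (G → A)) : Prop :=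
  IsClosed Y ∧ ∀ g : G, ∀ x ∈ Y, shift G A g x ∈ Y

/-- The cylinder set determined by the values of `P` on the finite shape `B`. -/
def cylinder {G A : Type u} (B : Finset G) (P : G → A) : Set (G → A) :=
  {y | ∀ b ∈ B, y b = P b}

/-- The language of `Y ⊆ A^G` over the finite shape `B` (a pattern is recorded by any
function `G → A` with the prescribed values on `B`). -/
def language {G A : Type u} (B : Finset G) (Y : Set (G → A)) : Set (G → A) :=
  {P | (cylinder B P ∩ Y).Nonempty}

/-- `Y` is a shift of finite type over the finite shape `B`: it is cut out by a family of
forbidden patterns on `B`. -/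
def IsSFTOver {G A : Type u} [Group G] (B : Finset G) (Y : Set (G → A)) : Prop :=
  ∃ ℱ : Set (G → A), Y = {x | ∀ g : G, ∀ P ∈ ℱ, shift G A g x ∉ cylinder B P}

/-- The shift action restricted to a subshift. -/
def subshiftDyn {G A : Type u} [Group G] [TopologicalSpace A] (Y : Set (G → A))
    (hY : IsSubshift Y) : DynAction G ↥Y where
  act g x := ⟨shift G A g x.1, hY.2 g x.1 x.2⟩
  continuous_act g := Continuous.subtype_mk
    ((continuous_pi fun h => continuous_apply (h * g)).comp continuous_subtype_val) _
  act_one x := by apply Subtype.ext; funext h; simp [shift]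
  act_mul g g' x := by apply Subtype.ext; funext h; simp [shift, mul_assoc]

/-! ### Hitting time sets and mixing-type properties -/

section Mixing

variable {G X : Type u} [Group G] [TopologicalSpace X]

/-- The hitting time set `N(U,V) = {g ≠ e : U ∩ Φ_{g⁻¹}(V) ≠ ∅}`. -/
def hittingTimes (Φ : DynAction G X) (U V : Set X) : Set G :=
  {g : G | g ≠ 1 ∧ (U ∩ Φ.act g⁻¹ '' V).Nonempty}

/-- Topological mixing: `G \ N(U,V)` is finite for all nonempty open `U, V`. -/
def IsMixing (Φ : DynAction G X) : Prop :=
  ∀ U V : Set X, IsOpen U → IsOpen V → U.Nonempty → V.Nonempty →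
    ((hittingTimes Φ U V)ᶜ : Set G).Finite

/-- Minimality: there is no nonempty proper closed invariant subset. -/
def IsMinimal (Φ : DynAction G X) : Prop :=
  ∀ K : Set X, IsClosed K → (∀ g : G, ∀ x ∈ K, Φ.act g x ∈ K) →
    K = ∅ ∨ K = Set.univ

end Mixing

/-! ### Inverse systems of subshifts -/

/-- An inverse system of dynamical systems whose terms are subshifts over finite
(discrete) alphabets, with the shift `G`-action. -/
structure SubshiftInvSys (G : Type u) [Group G] (Λ : Type u) [Preorder Λ] where
  A : Λ → Type u
  [topoA : ∀ l, TopologicalSpace (A l)]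
  [discA : ∀ l, DiscreteTopology (A l)]
  [finA : ∀ l, Finite (A l)]
  Y : ∀ l : Λ, Set (G → A l)
  subshift : ∀ l : Λ, IsSubshift (Y l)
  bond : ∀ {l m : Λ}, l ≤ m → ↥(Y m) → ↥(Y l)
  bond_cont : ∀ {l m : Λ} (h : l ≤ m), Continuous (bond h)
  bond_refl : ∀ (l : Λ) (x : ↥(Y l)), bond (le_refl l) x = x
  bond_comp : ∀ {l m n : Λ} (h1 : l ≤ m) (h2 : m ≤ n) (x : ↥(Y n)),
    bond h1 (bond h2 x) = bond (h1.trans h2) x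
  bond_equivariant : ∀ {l m : Λ} (h : l ≤ m) (g : G) (x : ↥(Y m)),
    (subshiftDyn (Y l) (subshift l)).act g (bond h x)
      = bond h ((subshiftDyn (Y m) (subshift m)).act g x)

namespace SubshiftInvSys

variable {G Λ : Type u} [Group G] [Preorder Λ]

instance (𝒮 : SubshiftInvSys G Λ) (l : Λ) : TopologicalSpace (𝒮.A l) := 𝒮.topoA l
instance (𝒮 : SubshiftInvSys G Λ) (l : Λ) : DiscreteTopology (𝒮.A l) := 𝒮.discA l
instance (𝒮 : SubshiftInvSys G Λ) (l : Λ) : Finite (𝒮.A l) := 𝒮.finA l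

/-- The `G`-action on the term `Y l` (the restricted shift). -/
def termDyn (𝒮 : SubshiftInvSys G Λ) (l : Λ) : DynAction G ↥(𝒮.Y l) :=
  subshiftDyn (𝒮.Y l) (𝒮.subshift l)

/-- The inverse limit of the system, as a subset of the product. -/
def limitSet (𝒮 : SubshiftInvSys G Λ) : Set (∀ l : Λ, ↥(𝒮.Y l)) :=
  {x | ∀ (l m : Λ) (h : l ≤ m), 𝒮.bond h (x m) = x l}

lemma act_mem_limitSet (𝒮 : SubshiftInvSys G Λ) (g : G) (x : ∀ l : Λ, ↥(𝒮.Y l))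
    (hx : x ∈ 𝒮.limitSet) : (fun l => (𝒮.termDyn l).act g (x l)) ∈ 𝒮.limitSet := by
  intro l m h
  show 𝒮.bond h ((𝒮.termDyn m).act g (x m)) = (𝒮.termDyn l).act g (x l)
  rw [show (𝒮.termDyn m).act g (x m)
        = (subshiftDyn (𝒮.Y m) (𝒮.subshift m)).act g (x m) from rfl,
      ← 𝒮.bond_equivariant h g (x m)]
  show (𝒮.termDyn l).act g (𝒮.bond h (x m)) = _
  rw [hx l m h]

/-- The induced `G`-action `σ*` on the inverse limit. -/
def limitDyn (𝒮 : SubshiftInvSys G Λ) : DynAction G ↥𝒮.limitSet where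
  act g x := ⟨fun l => (𝒮.termDyn l).act g (x.1 l), 𝒮.act_mem_limitSet g x.1 x.2⟩
  continuous_act g := Continuous.subtype_mk
    (continuous_pi fun l => ((𝒮.termDyn l).continuous_act g).comp
      ((continuous_apply l).comp continuous_subtype_val)) _
  act_one x := by
    apply Subtype.ext; funext l
    exact (𝒮.termDyn l).act_one (x.1 l)
  act_mul g g' x := by
    apply Subtype.ext; funext l
    exact (𝒮.termDyn l).act_mul g g' (x.1 l)

/-- The Mittag-Leffler condition. -/
def ML (𝒮 : SubshiftInvSys G Λ) : Prop :=
  ∀ l : Λ, ∃ m : Λ, ∃ h : l ≤ m, ∀ (n : Λ) (h' : m ≤ n),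
    Set.range (𝒮.bond (h.trans h')) = Set.range (𝒮.bond h)

end SubshiftInvSys

/-- An inverse system of subshifts over some directed index set, packaged together
with its (directed, preordered) index. -/
structure SubshiftInvSysPkg (G : Type u) [Group G] where
  Idx : Type u
  [pre : Preorder Idx]
  directed : IsDirected Idx (· ≤ ·)
  sys : SubshiftInvSys G Idx

namespace SubshiftInvSysPkg

variable {G : Type u} [Group G]

instance (P : SubshiftInvSysPkg G) : Preorder P.Idx := P.pre

end SubshiftInvSysPkg

section Dynamics

variable {G X Y : Type u} [Group G] [TopologicalSpace X] [TopologicalSpace Y]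

namespace DynAction

variable (Φ : DynAction G X)

theorem act_inv_act (g : G) (x : X) : Φ.act g⁻¹ (Φ.act g x) = x := by
  rw [← Φ.act_mul, inv_mul_cancel, Φ.act_one]

theorem act_act_inv (g : G) (x : X) : Φ.act g (Φ.act g⁻¹ x) = x := by
  rw [← Φ.act_mul, mul_inv_cancel, Φ.act_one]

end DynAction

theorem mem_hittingTimes_iff {Φ : DynAction G X} {U V : Set X} {g : G} :
    g ∈ hittingTimes Φ U V ↔ g ≠ 1 ∧ ∃ x ∈ U, Φ.act g x ∈ V := by
  refine and_congr_right fun _ => ⟨?_, ?_⟩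
  · rintro ⟨x, hxU, v, hv, rfl⟩
    exact ⟨_, hxU, by rwa [Φ.act_act_inv]⟩
  · rintro ⟨x, hxU, hxV⟩
    exact ⟨x, hxU, _, hxV, Φ.act_inv_act g x⟩

theorem isMixing_of_subsingleton [Subsingleton X] (Φ : DynAction G X) : IsMixing Φ := by
  rintro U V - - ⟨x, hx⟩ ⟨y, hy⟩
  refine (finite_singleton 1).subset fun g hg => by_contra fun hg1 => hg ?_
  exact mem_hittingTimes_iff.2 ⟨hg1, x, hx, Subsingleton.elim y (Φ.act g x) ▸ hy⟩

theorem IsMixing.of_isFactorMap {ΦX : DynAction G X} {ΦY : DynAction G Y} {f : X → Y}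
    (hf : IsFactorMap ΦX ΦY f) (hmix : IsMixing ΦX) : IsMixing ΦY := by
  obtain ⟨hcont, hsurj, hequiv⟩ := hf
  intro U V hU hV hUne hVne
  refine (hmix _ _ (hU.preimage hcont) (hV.preimage hcont) (hUne.preimage hsurj)
    (hVne.preimage hsurj)).subset (compl_subset_compl.mpr fun g hg => ?_)
  obtain ⟨hg1, x, hxU, hxV⟩ := mem_hittingTimes_iff.1 hg
  exact mem_hittingTimes_iff.2 ⟨hg1, f x, hxU, by rwa [mem_preimage, hequiv] at hxV⟩

theorem IsMixing.of_isConjugacy [CompactSpace X] [T2Space Y] {ΦX : DynAction G X}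
    {ΦY : DynAction G Y} {f : X → Y} (hf : IsConjugacy ΦX ΦY f) (hmix : IsMixing ΦY) :
    IsMixing ΦX := by
  obtain ⟨hcont, hbij, hequiv⟩ := hf
  let e : X ≃ₜ Y := hcont.homeoOfEquivCompactToT2 (f := Equiv.ofBijective f hbij)
  refine hmix.of_isFactorMap ⟨e.symm.continuous, e.symm.surjective, fun g y => hbij.1 ?_⟩
  change e (e.symm _) = f (ΦX.act g (e.symm y))
  rw [hequiv, e.apply_symm_apply]
  exact congrArg (ΦY.act g) (e.apply_symm_apply y).symm

end Dynamics

namespace SubshiftInvSys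

variable {G Λ : Type u} [Group G] [Preorder Λ] (𝒮 : SubshiftInvSys G Λ)

instance compactSpace_Y (l : Λ) : CompactSpace ↥(𝒮.Y l) :=
  isCompact_iff_compactSpace.mp (𝒮.subshift l).1.isCompact

theorem termDyn_act_bond {l m : Λ} (h : l ≤ m) (g : G) (x : ↥(𝒮.Y m)) :
    (𝒮.termDyn l).act g (𝒮.bond h x) = 𝒮.bond h ((𝒮.termDyn m).act g x) :=
  𝒮.bond_equivariant h g x

theorem exists_mem_limitSet_eq_of_stable [IsDirected Λ (· ≤ ·)] [Nonempty (∀ l, ↥(𝒮.Y l))]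
    {m m₀ : Λ} (hm : m ≤ m₀)
    (hstab : ∀ (n : Λ) (h' : m₀ ≤ n), range (𝒮.bond (hm.trans h')) = range (𝒮.bond hm))
    {y : ↥(𝒮.Y m)} (hy : y ∈ range (𝒮.bond hm)) : ∃ z ∈ 𝒮.limitSet, z m = y := by
  classical
  have : Nonempty Λ := ⟨m⟩
  let z₀ : ∀ l, ↥(𝒮.Y l) := Classical.arbitrary _
  let C : Λ → Set (∀ l, ↥(𝒮.Y l)) := fun u =>
    {z | z m = y} ∩ ⋂ (p) (q) (h : p ≤ q) (_ : q ≤ u), {z | 𝒮.bond h (z q) = z p}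
  have hclosed : ∀ u, IsClosed (C u) := fun u =>
    (isClosed_eq (continuous_apply m) continuous_const).inter <|
      isClosed_iInter fun p => isClosed_iInter fun q => isClosed_iInter fun h =>
        isClosed_iInter fun _ =>
          isClosed_eq ((𝒮.bond_cont h).comp (continuous_apply q)) (continuous_apply p)
  have hanti : Antitone C := fun u v huv z hz => by
    simp only [C, mem_inter_iff, mem_iInter] at hz ⊢
    exact ⟨hz.1, fun p q h hq => hz.2 p q h (hq.trans huv)⟩
  have hne : ∀ u, (C u).Nonempty := by
    intro u
    obtain ⟨v, hm₀v, huv⟩ := exists_ge_ge m₀ u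
    obtain ⟨w, hw⟩ : y ∈ range (𝒮.bond (hm.trans hm₀v)) := (hstab v hm₀v).symm ▸ hy
    refine ⟨fun l => if h : l ≤ v then 𝒮.bond h w else z₀ l, ?_⟩
    simp only [C, mem_inter_iff, mem_iInter, mem_ofPred_eq]
    refine ⟨by rw [dif_pos (hm.trans hm₀v), hw], fun p q h hqu => ?_⟩
    rw [dif_pos (hqu.trans huv), dif_pos ((h.trans hqu).trans huv), 𝒮.bond_comp]
  obtain ⟨z, hz⟩ := IsCompact.nonempty_iInter_of_directed_nonempty_isCompact_isClosed C
    hanti.directed_ge hne (fun u => (hclosed u).isCompact) hclosed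
  simp only [C, mem_iInter, mem_inter_iff] at hz
  exact ⟨z, fun p q h => (hz q).2 p q h le_rfl, (hz m).1⟩

theorem exists_isOpen_level_subset [IsDirected Λ (· ≤ ·)] [Nonempty Λ]
    {U : Set ↥𝒮.limitSet} (hU : IsOpen U) {z : ↥𝒮.limitSet} (hz : z ∈ U) :
    ∃ m, ∀ n, m ≤ n → ∃ W : Set ↥(𝒮.Y n),
      IsOpen W ∧ z.1 n ∈ W ∧ ∀ x : ↥𝒮.limitSet, x.1 n ∈ W → x ∈ U := by
  obtain ⟨U', hU'o, rfl⟩ := isOpen_induced_iff.mp hU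
  obtain ⟨F, O, hO, hFO⟩ := isOpen_pi_iff.mp hU'o z.1 hz
  obtain ⟨m, hm⟩ := F.exists_le
  refine ⟨m, fun n hmn => ⟨⋂ l : F, 𝒮.bond ((hm l l.2).trans hmn) ⁻¹' O l,
    isOpen_iInter_of_finite fun l => (hO l l.2).1.preimage (𝒮.bond_cont _), ?_, ?_⟩⟩
  · exact mem_iInter.2 fun l => by rw [mem_preimage, z.2]; exact (hO l l.2).2
  · intro x hx
    refine hFO fun l hl => ?_
    rw [← x.2 l n ((hm l hl).trans hmn)]
    exact mem_iInter.1 hx ⟨l, hl⟩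

theorem isMixing_limitDyn [IsDirected Λ (· ≤ ·)] (hML : 𝒮.ML)
    (hmix : ∀ l, IsMixing (𝒮.termDyn l)) : IsMixing 𝒮.limitDyn := by
  rcases isEmpty_or_nonempty Λ with hΛ | hΛ
  · have : Subsingleton ↥𝒮.limitSet :=
      ⟨fun a b => Subtype.ext (funext fun l => isEmptyElim l)⟩
    exact isMixing_of_subsingleton _
  intro U V hU hV ⟨zU, hzU⟩ ⟨zV, hzV⟩
  have : Nonempty (∀ l, ↥(𝒮.Y l)) := ⟨zU.1⟩
  obtain ⟨mU, hmU⟩ := 𝒮.exists_isOpen_level_subset hU hzU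
  obtain ⟨mV, hmV⟩ := 𝒮.exists_isOpen_level_subset hV hzV
  obtain ⟨m, hUm, hVm⟩ := exists_ge_ge mU mV
  obtain ⟨WU, hWUo, hzWU, hWU⟩ := hmU m hUm
  obtain ⟨WV, hWVo, hzWV, hWV⟩ := hmV m hVm
  obtain ⟨m₀, hm, hstab⟩ := hML m
  have hU₀ : (𝒮.bond hm ⁻¹' WU).Nonempty := ⟨zU.1 m₀, by rw [mem_preimage, zU.2]; exact hzWU⟩
  have hV₀ : (𝒮.bond hm ⁻¹' WV).Nonempty := ⟨zV.1 m₀, by rw [mem_preimage, zV.2]; exact hzWV⟩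
  refine (hmix m₀ _ _ (hWUo.preimage (𝒮.bond_cont hm)) (hWVo.preimage (𝒮.bond_cont hm))
    hU₀ hV₀).subset (compl_subset_compl.mpr fun g hg => ?_)
  obtain ⟨hg1, x, hxU, hxV⟩ := mem_hittingTimes_iff.1 hg
  obtain ⟨z, hz, hzm⟩ := 𝒮.exists_mem_limitSet_eq_of_stable hm hstab ⟨x, rfl⟩
  refine mem_hittingTimes_iff.2 ⟨hg1, ⟨z, hz⟩, hWU _ (by change z m ∈ WU; rwa [hzm]), hWV _ ?_⟩
  change (𝒮.termDyn m).act g (z m) ∈ WV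
  rwa [hzm, termDyn_act_bond]

end SubshiftInvSys

section Itinerary

variable {G X : Type u} [TopologicalSpace X]

abbrev ClopenFamily (X : Type u) [TopologicalSpace X] : Type u :=
  Finset {s : Set X // IsClopen s}

def restrictItinerary {S T : ClopenFamily X} (h : S ≤ T) (y : G → ({s // s ∈ T} → Bool)) :
    G → ({s // s ∈ S} → Bool) :=
  fun g s => y g ⟨s.1, h s.2⟩

theorem continuous_restrictItinerary {S T : ClopenFamily X} (h : S ≤ T) :
    Continuous (restrictItinerary (G := G) h) :=
  continuous_pi fun g => continuous_pi fun s =>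
    (continuous_apply (⟨s.1, h s.2⟩ : {s // s ∈ T})).comp (continuous_apply g)

variable [Group G]

noncomputable def itinerary (Φ : DynAction G X) (S : ClopenFamily X) (x : X) :
    G → ({s // s ∈ S} → Bool) :=
  fun g s => s.1.1.boolIndicator (Φ.act g x)

theorem continuous_itinerary (Φ : DynAction G X) (S : ClopenFamily X) :
    Continuous (itinerary Φ S) :=
  continuous_pi fun g => continuous_pi fun s =>
    ((continuous_boolIndicator_iff_isClopen _).mpr s.1.2).comp (Φ.continuous_act g)

theorem shift_itinerary (Φ : DynAction G X) (S : ClopenFamily X) (g : G) (x : X) :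
    shift G _ g (itinerary Φ S x) = itinerary Φ S (Φ.act g x) := by
  funext h s
  simp [shift, itinerary, Φ.act_mul]

theorem mem_range_restrictItinerary (Φ : DynAction G X) {S T : ClopenFamily X} (h : S ≤ T)
    {y : G → ({s // s ∈ T} → Bool)} (hy : y ∈ range (itinerary Φ T)) :
    restrictItinerary h y ∈ range (itinerary Φ S) := by
  obtain ⟨x, rfl⟩ := hy
  exact ⟨x, rfl⟩

variable [CompactSpace X]

noncomputable def itinerarySys (Φ : DynAction G X) : SubshiftInvSys G (ClopenFamily X) where
  A S := {s // s ∈ S} → Bool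
  topoA := fun _ => inferInstance
  discA := fun _ => inferInstance
  finA := fun _ => inferInstance
  Y S := range (itinerary Φ S)
  subshift S := ⟨(isCompact_range (continuous_itinerary Φ S)).isClosed, by
    rintro g _ ⟨x, rfl⟩; exact ⟨Φ.act g x, (shift_itinerary Φ S g x).symm⟩⟩
  bond h y := ⟨restrictItinerary h y.1, mem_range_restrictItinerary Φ h y.2⟩
  bond_cont h := ((continuous_restrictItinerary h).comp continuous_subtype_val).subtype_mk _
  bond_refl S x := rfl
  bond_comp h1 h2 x := rfl
  bond_equivariant h g x := rfl

theorem itinerarySys_bond_surjective (Φ : DynAction G X) {S T : ClopenFamily X} (h : S ≤ T) :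
    Function.Surjective ((itinerarySys Φ).bond h) := by
  rintro ⟨_, x, rfl⟩
  exact ⟨⟨itinerary Φ T x, mem_range_self x⟩, rfl⟩

theorem itinerarySys_ML (Φ : DynAction G X) : (itinerarySys Φ).ML := fun S =>
  ⟨S, le_rfl, fun _ _ => by
    rw [(itinerarySys_bond_surjective Φ _).range_eq, (itinerarySys_bond_surjective Φ _).range_eq]⟩

theorem isFactorMap_itinerary (Φ : DynAction G X) (S : ClopenFamily X) :
    IsFactorMap Φ ((itinerarySys Φ).termDyn S)
      (fun x => (⟨itinerary Φ S x, mem_range_self x⟩ : ↥((itinerarySys Φ).Y S))) := by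
  refine ⟨(continuous_itinerary Φ S).subtype_mk _, ?_, fun g x => ?_⟩
  · rintro ⟨_, x, rfl⟩
    exact ⟨x, rfl⟩
  · exact Subtype.ext (shift_itinerary Φ S g x).symm

noncomputable def itineraryLimit (Φ : DynAction G X) (x : X) : ↥(itinerarySys Φ).limitSet :=
  ⟨fun S => ⟨itinerary Φ S x, mem_range_self x⟩, fun _ _ _ => rfl⟩

theorem itineraryLimit_injective [TotallySeparatedSpace X]
    (Φ : DynAction G X) : Function.Injective (itineraryLimit Φ) := by
  intro x y hxy
  by_contra hne
  obtain ⟨s, hs, hxs, hys⟩ := exists_isClopen_of_totally_separated hne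
  have h := congrArg (fun z => (z.1 {⟨s, hs⟩}).1 1 ⟨⟨s, hs⟩, Finset.mem_singleton_self _⟩) hxy
  simp only [itineraryLimit, itinerary, Φ.act_one] at h
  rw [(s.mem_iff_boolIndicator x).mp hxs, eq_comm, ← s.mem_iff_boolIndicator] at h
  exact hys h

theorem itineraryLimit_surjective (Φ : DynAction G X) :
    Function.Surjective (itineraryLimit Φ) := by
  intro z
  let K : ClopenFamily X → Set X := fun S => itinerary Φ S ⁻¹' {(z.1 S).1}
  have hclosed : ∀ S, IsClosed (K S) :=
    fun S => isClosed_singleton.preimage (continuous_itinerary Φ S)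
  have hanti : Antitone K := fun S T h x hx => by
    change itinerary Φ T x = (z.1 T).1 at hx
    change itinerary Φ S x = (z.1 S).1
    rw [← z.2 S T h]
    exact congrArg (restrictItinerary h) hx
  obtain ⟨x, hx⟩ := IsCompact.nonempty_iInter_of_directed_nonempty_isCompact_isClosed K
    hanti.directed_ge (fun S => (z.1 S).2) (fun S => (hclosed S).isCompact) hclosed
  exact ⟨x, Subtype.ext (funext fun S => Subtype.ext (mem_iInter.1 hx S))⟩

theorem isConjugacy_itineraryLimit [TotallySeparatedSpace X]
    (Φ : DynAction G X) : IsConjugacy Φ (itinerarySys Φ).limitDyn (itineraryLimit Φ) :=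
  ⟨(continuous_pi fun S => (continuous_itinerary Φ S).subtype_mk _).subtype_mk _,
    ⟨itineraryLimit_injective Φ, itineraryLimit_surjective Φ⟩,
    fun g x => Subtype.ext (funext fun S => Subtype.ext (shift_itinerary Φ S g x).symm)⟩

end Itinerary

theorem mixing_iff_conjugate_invlim_mixing_subshifts_general
    {G X : Type} [Group G] [TopologicalSpace X]
    [CompactSpace X] [T2Space X] [TotallyDisconnectedSpace X]
    (Φ : DynAction G X) :
    IsMixing Φ ↔
      ∃ P : SubshiftInvSysPkg G,
        P.sys.ML ∧
        (∀ l : P.Idx, IsMixing (P.sys.termDyn l)) ∧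
        ∃ f : X → ↥P.sys.limitSet, IsConjugacy Φ P.sys.limitDyn f := by
  constructor
  · intro hmix
    exact ⟨⟨ClopenFamily X, inferInstance, itinerarySys Φ⟩, itinerarySys_ML Φ,
      fun S => hmix.of_isFactorMap (isFactorMap_itinerary Φ S), _, isConjugacy_itineraryLimit Φ⟩
  · rintro ⟨P, hML, hmix, f, hf⟩
    have := P.directed
    exact (P.sys.isMixing_limitDyn hML hmix).of_isConjugacy hf

/-- **Theorem 1.4 (mixing case).** For a compact totally disconnected Hausdorff space,
`Φ` is mixing iff `(X,G,Φ)` is conjugate to the inverse limit of an ML inverse system of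
mixing subshifts. -/
theorem mixing_iff_conjugate_invlim_mixing_subshifts
    {G X : Type} [Group G] [Countable G] [TopologicalSpace X]
    [CompactSpace X] [T2Space X] [TotallyDisconnectedSpace X]
    (Φ : DynAction G X) :
    IsMixing Φ ↔
      ∃ P : SubshiftInvSysPkg G,
        P.sys.ML ∧
        (∀ l : P.Idx, IsMixing (P.sys.termDyn l)) ∧
        ∃ f : X → ↥P.sys.limitSet, IsConjugacy Φ P.sys.limitDyn f :=
  mixing_iff_conjugate_invlim_mixing_subshifts_general Φ
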